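/- Let B be a bialgebra over a commutative ring k, A a k-algebra and k-coalgebra, and ψ : B⊗A → A⊗B, φ : A⊗B → B⊗A k-linear maps such that A #_ψ^φ B is a cross product bialgebra. If ψ is left conormal (i.e. (ε_A ⊗ id_B)ψ(b⊗a) = ε_A(a)·b for all a,b), then the map π : A⊗B → B, π(a⊗b) = ε_A(a) b, is a bialgebra homomorphism from H = A #_ψ^φ B to B, the map i : B → A⊗B, i(b) = 1_A ⊗ b, is an algebra homomorphism, and π ∘ i = id_B. -/

import Mathlib

/-! Left conormality of `ψ` makes `π` multiplicative as soon as `ε_A` is: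
`π((a ⊗ b)(a' ⊗ b')) = ε(a) π(ψ(b ⊗ a')) b' = ε(a) ε(a') b b'`. That `ε_A` is multiplicative
and unital, and that `ψ(b ⊗ 1) = 1 ⊗ b` (which makes `i` multiplicative), is read off the
bialgebra axioms of `H` on elements `a ⊗ 1` and `1 ⊗ b`. Comultiplicativity needs the dual fact
that `φ` is left conormal, `(id_B ⊗ ε_A) φ = ε_A ⊗ id_B`, which is the right counit axiom of `H`
pushed forward along `π`; then `(π ⊗ π) Δ_H (a ⊗ b) = ε(a₁) ε(a₂) b₁ ⊗ b₂ = ε(a) Δ(b)`. -/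

open TensorProduct

variable {k A B : Type*} [CommRing k] [Ring A] [Algebra k A] [Coalgebra k A]
  [Ring B] [Bialgebra k B]

/-- The cross product multiplication on `A ⊗ B` induced by `ψ : B ⊗ A → A ⊗ B`. -/
noncomputable def crossMul (ψ : B ⊗[k] A →ₗ[k] A ⊗[k] B) :
    (A ⊗[k] B) ⊗[k] (A ⊗[k] B) →ₗ[k] A ⊗[k] B :=
  TensorProduct.map (LinearMap.mul' k A) (LinearMap.mul' k B) ∘ₗ
    (TensorProduct.assoc k (A ⊗[k] A) B B).toLinearMap ∘ₗ
    TensorProduct.map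
      ((TensorProduct.assoc k A A B).symm.toLinearMap ∘ₗ
        TensorProduct.map (LinearMap.id : A →ₗ[k] A) ψ ∘ₗ
        (TensorProduct.assoc k A B A).toLinearMap)
      (LinearMap.id : B →ₗ[k] B) ∘ₗ
    (TensorProduct.assoc k (A ⊗[k] B) A B).symm.toLinearMap

/-- (a): `ψ ∘ (m_B ⊗ id_A) = (id_A ⊗ m_B) ∘ (ψ ⊗ id_B) ∘ (id_B ⊗ ψ)`. -/
def psiCondA (ψ : B ⊗[k] A →ₗ[k] A ⊗[k] B) : Prop :=
  ψ ∘ₗ TensorProduct.map (LinearMap.mul' k B) (LinearMap.id : A →ₗ[k] A) =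
    TensorProduct.map (LinearMap.id : A →ₗ[k] A) (LinearMap.mul' k B) ∘ₗ
      (TensorProduct.assoc k A B B).toLinearMap ∘ₗ
      TensorProduct.map ψ (LinearMap.id : B →ₗ[k] B) ∘ₗ
      (TensorProduct.assoc k B A B).symm.toLinearMap ∘ₗ
      TensorProduct.map (LinearMap.id : B →ₗ[k] B) ψ ∘ₗ
      (TensorProduct.assoc k B B A).toLinearMap

/-- (b): `ψ ∘ (id_B ⊗ m_A) = (m_A ⊗ id_B) ∘ (id_A ⊗ ψ) ∘ (ψ ⊗ id_A)`. -/
def psiCondB (ψ : B ⊗[k] A →ₗ[k] A ⊗[k] B) : Prop :=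
  ψ ∘ₗ TensorProduct.map (LinearMap.id : B →ₗ[k] B) (LinearMap.mul' k A) =
    TensorProduct.map (LinearMap.mul' k A) (LinearMap.id : B →ₗ[k] B) ∘ₗ
      (TensorProduct.assoc k A A B).symm.toLinearMap ∘ₗ
      TensorProduct.map (LinearMap.id : A →ₗ[k] A) ψ ∘ₗ
      (TensorProduct.assoc k A B A).toLinearMap ∘ₗ
      TensorProduct.map ψ (LinearMap.id : A →ₗ[k] A) ∘ₗ
      (TensorProduct.assoc k B A A).symm.toLinearMap

/-- (c): `ψ(b ⊗ 1_A) = 1_A ⊗ b`. -/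
def psiCondC (ψ : B ⊗[k] A →ₗ[k] A ⊗[k] B) : Prop :=
  ∀ b : B, ψ (b ⊗ₜ[k] (1 : A)) = (1 : A) ⊗ₜ[k] b

/-- (d): `ψ(1_B ⊗ a) = a ⊗ 1_B`. -/
def psiCondD (ψ : B ⊗[k] A →ₗ[k] A ⊗[k] B) : Prop :=
  ∀ a : A, ψ ((1 : B) ⊗ₜ[k] a) = a ⊗ₜ[k] (1 : B)

/-- The cross coproduct comultiplication on `A ⊗ B` induced by `φ : A ⊗ B → B ⊗ A`. -/
noncomputable def crossComul (φ : A ⊗[k] B →ₗ[k] B ⊗[k] A) :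
    A ⊗[k] B →ₗ[k] (A ⊗[k] B) ⊗[k] (A ⊗[k] B) :=
  (TensorProduct.assoc k (A ⊗[k] B) A B).toLinearMap ∘ₗ
    TensorProduct.map
      ((TensorProduct.assoc k A B A).symm.toLinearMap ∘ₗ
        TensorProduct.map (LinearMap.id : A →ₗ[k] A) φ ∘ₗ
        (TensorProduct.assoc k A A B).toLinearMap)
      (LinearMap.id : B →ₗ[k] B) ∘ₗ
    (TensorProduct.assoc k (A ⊗[k] A) B B).symm.toLinearMap ∘ₗ
    TensorProduct.map (Coalgebra.comul (R := k) (A := A)) (Coalgebra.comul (R := k) (A := B))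

/-- The counit `ε_A ⊗ ε_B` on `A ⊗ B`. -/
noncomputable def crossCounit : A ⊗[k] B →ₗ[k] k :=
  (TensorProduct.lid k k).toLinearMap ∘ₗ
    TensorProduct.map (Coalgebra.counit (R := k) (A := A)) (Coalgebra.counit (R := k) (A := B))

/-- (a): `(Δ_B ⊗ id_A) ∘ φ = (id_B ⊗ φ) ∘ (φ ⊗ id_B) ∘ (id_A ⊗ Δ_B)`. -/
def phiCondA (φ : A ⊗[k] B →ₗ[k] B ⊗[k] A) : Prop :=
  TensorProduct.map (Coalgebra.comul (R := k) (A := B)) (LinearMap.id : A →ₗ[k] A) ∘ₗ φ =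
    (TensorProduct.assoc k B B A).symm.toLinearMap ∘ₗ
      TensorProduct.map (LinearMap.id : B →ₗ[k] B) φ ∘ₗ
      (TensorProduct.assoc k B A B).toLinearMap ∘ₗ
      TensorProduct.map φ (LinearMap.id : B →ₗ[k] B) ∘ₗ
      (TensorProduct.assoc k A B B).symm.toLinearMap ∘ₗ
      TensorProduct.map (LinearMap.id : A →ₗ[k] A) (Coalgebra.comul (R := k) (A := B))

/-- (b): `(id_B ⊗ Δ_A) ∘ φ = (φ ⊗ id_A) ∘ (id_A ⊗ φ) ∘ (Δ_A ⊗ id_B)`. -/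
def phiCondB (φ : A ⊗[k] B →ₗ[k] B ⊗[k] A) : Prop :=
  TensorProduct.map (LinearMap.id : B →ₗ[k] B) (Coalgebra.comul (R := k) (A := A)) ∘ₗ φ =
    (TensorProduct.assoc k B A A).toLinearMap ∘ₗ
      TensorProduct.map φ (LinearMap.id : A →ₗ[k] A) ∘ₗ
      (TensorProduct.assoc k A B A).symm.toLinearMap ∘ₗ
      TensorProduct.map (LinearMap.id : A →ₗ[k] A) φ ∘ₗ
      (TensorProduct.assoc k A A B).toLinearMap ∘ₗ
      TensorProduct.map (Coalgebra.comul (R := k) (A := A)) (LinearMap.id : B →ₗ[k] B)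

/-- (c): `(id_B ⊗ ε_A) ∘ φ = ε_A ⊗ id_B`. -/
def phiCondC (φ : A ⊗[k] B →ₗ[k] B ⊗[k] A) : Prop :=
  (TensorProduct.rid k B).toLinearMap ∘ₗ
      TensorProduct.map (LinearMap.id : B →ₗ[k] B) (Coalgebra.counit (R := k) (A := A)) ∘ₗ φ =
    (TensorProduct.lid k B).toLinearMap ∘ₗ
      TensorProduct.map (Coalgebra.counit (R := k) (A := A)) (LinearMap.id : B →ₗ[k] B)

/-- (d): `(ε_B ⊗ id_A) ∘ φ = id_A ⊗ ε_B`. -/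
def phiCondD (φ : A ⊗[k] B →ₗ[k] B ⊗[k] A) : Prop :=
  (TensorProduct.lid k A).toLinearMap ∘ₗ
      TensorProduct.map (Coalgebra.counit (R := k) (A := B)) (LinearMap.id : A →ₗ[k] A) ∘ₗ φ =
    (TensorProduct.rid k A).toLinearMap ∘ₗ
      TensorProduct.map (LinearMap.id : A →ₗ[k] A) (Coalgebra.counit (R := k) (A := B))

/-- `A ⊗ B` with the cross product multiplication induced by `ψ`, unit `1 ⊗ 1`, the cross
coproduct comultiplication induced by `φ` and counit `ε_A ⊗ ε_B` is a bialgebra. -/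
def IsCrossBialgebra (ψ : B ⊗[k] A →ₗ[k] A ⊗[k] B) (φ : A ⊗[k] B →ₗ[k] B ⊗[k] A) : Prop :=
  (∀ x y z : A ⊗[k] B,
      crossMul ψ (crossMul ψ (x ⊗ₜ[k] y) ⊗ₜ[k] z) =
        crossMul ψ (x ⊗ₜ[k] crossMul ψ (y ⊗ₜ[k] z))) ∧
  (∀ x : A ⊗[k] B, crossMul ψ (((1 : A) ⊗ₜ[k] (1 : B)) ⊗ₜ[k] x) = x) ∧
  (∀ x : A ⊗[k] B, crossMul ψ (x ⊗ₜ[k] ((1 : A) ⊗ₜ[k] (1 : B))) = x) ∧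
  ((TensorProduct.assoc k (A ⊗[k] B) (A ⊗[k] B) (A ⊗[k] B)).toLinearMap ∘ₗ
      TensorProduct.map (crossComul φ) (LinearMap.id : A ⊗[k] B →ₗ[k] A ⊗[k] B) ∘ₗ
        crossComul φ =
      TensorProduct.map (LinearMap.id : A ⊗[k] B →ₗ[k] A ⊗[k] B) (crossComul φ) ∘ₗ
        crossComul φ) ∧
  ((TensorProduct.lid k (A ⊗[k] B)).toLinearMap ∘ₗ
      TensorProduct.map (crossCounit (k := k) (A := A) (B := B))
        (LinearMap.id : A ⊗[k] B →ₗ[k] A ⊗[k] B) ∘ₗ crossComul φ = LinearMap.id) ∧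
  ((TensorProduct.rid k (A ⊗[k] B)).toLinearMap ∘ₗ
      TensorProduct.map (LinearMap.id : A ⊗[k] B →ₗ[k] A ⊗[k] B)
        (crossCounit (k := k) (A := A) (B := B)) ∘ₗ crossComul φ = LinearMap.id) ∧
  (crossComul φ ((1 : A) ⊗ₜ[k] (1 : B)) =
      ((1 : A) ⊗ₜ[k] (1 : B)) ⊗ₜ[k] ((1 : A) ⊗ₜ[k] (1 : B))) ∧
  (crossCounit (k := k) (A := A) (B := B) ((1 : A) ⊗ₜ[k] (1 : B)) = 1) ∧
  (crossComul φ ∘ₗ crossMul ψ =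
      TensorProduct.map (crossMul ψ) (crossMul ψ) ∘ₗ
        (TensorProduct.tensorTensorTensorComm k (A ⊗[k] B) (A ⊗[k] B) (A ⊗[k] B)
          (A ⊗[k] B)).toLinearMap ∘ₗ
        TensorProduct.map (crossComul φ) (crossComul φ)) ∧
  (crossCounit (k := k) (A := A) (B := B) ∘ₗ crossMul ψ =
      LinearMap.mul' k k ∘ₗ
        TensorProduct.map (crossCounit (k := k) (A := A) (B := B))
          (crossCounit (k := k) (A := A) (B := B)))

/-- The projection `π(a ⊗ b) = ε_A(a) b`. -/
noncomputable def crossProj : A ⊗[k] B →ₗ[k] B :=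
  (TensorProduct.lid k B).toLinearMap ∘ₗ
    TensorProduct.map (Coalgebra.counit (R := k) (A := A)) (LinearMap.id : B →ₗ[k] B)

open Coalgebra LinearMap

section CrossProduct

variable (ψ : B ⊗[k] A →ₗ[k] A ⊗[k] B) (φ : A ⊗[k] B →ₗ[k] B ⊗[k] A)

@[simp] lemma crossProj_tmul (a : A) (b : B) :
    crossProj (k := k) (A := A) (B := B) (a ⊗ₜ[k] b) = counit (R := k) a • b := by
  simp [crossProj]

@[simp] lemma crossCounit_tmul (a : A) (b : B) :
    crossCounit (k := k) (A := A) (B := B) (a ⊗ₜ[k] b) =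
      counit (R := k) a * counit (R := k) b := by
  simp [crossCounit]

lemma counit_comp_crossProj :
    counit ∘ₗ crossProj (k := k) (A := A) (B := B) = crossCounit := by
  ext a b
  simp [smul_eq_mul]

omit [Coalgebra k A] in
lemma crossMul_tmul_tmul (a a' : A) (b b' : B) :
    crossMul ψ ((a ⊗ₜ[k] b) ⊗ₜ[k] (a' ⊗ₜ[k] b')) =
      map (mulLeft k a) (mulRight k b') (ψ (b ⊗ₜ[k] a')) := by
  simp only [crossMul, comp_apply, LinearEquiv.coe_coe, assoc_symm_tmul, map_tmul, id_coe, id_eq,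
    assoc_tmul]
  induction ψ (b ⊗ₜ[k] a') using TensorProduct.induction_on with
  | zero => simp
  | tmul p q => simp
  | add x y hx hy => simp [tmul_add, add_tmul, hx, hy]

omit [Coalgebra k A] in
lemma crossMul_one_tmul_one_tmul (hψ : psiCondC ψ) (b b' : B) :
    crossMul ψ (((1 : A) ⊗ₜ[k] b) ⊗ₜ[k] ((1 : A) ⊗ₜ[k] b')) = (1 : A) ⊗ₜ[k] (b * b') := by
  simp [crossMul_tmul_tmul, hψ b]

lemma crossProj_map_mulLeft_mulRight
    (hε : ∀ x y : A, counit (R := k) (x * y) = counit (R := k) x * counit (R := k) y)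
    (a : A) (b : B) (t : A ⊗[k] B) :
    crossProj (map (mulLeft k a) (mulRight k b) t) = counit (R := k) a • (crossProj t * b) := by
  induction t using TensorProduct.induction_on with
  | zero => simp
  | tmul p q => simp [hε, mul_smul]
  | add x y hx hy => simp [hx, hy, add_mul]

lemma crossProj_comp_crossMul
    (hε : ∀ x y : A, counit (R := k) (x * y) = counit (R := k) x * counit (R := k) y)
    (hψ : ∀ (b : B) (a : A), crossProj (ψ (b ⊗ₜ[k] a)) = counit (R := k) a • b) :
    crossProj ∘ₗ crossMul ψ = mul' k B ∘ₗ map crossProj crossProj := by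
  ext a b a' b'
  simp [crossMul_tmul_tmul, crossProj_map_mulLeft_mulRight hε, hψ, smul_comm (counit (R := k) a)]

/-- `id_A ⊗ φ ⊗ id_B`, up to associators. -/
noncomputable def middleTensor :
    (A ⊗[k] A) ⊗[k] (B ⊗[k] B) →ₗ[k] (A ⊗[k] B) ⊗[k] (A ⊗[k] B) :=
  (TensorProduct.assoc k (A ⊗[k] B) A B).toLinearMap ∘ₗ
    TensorProduct.map
      ((TensorProduct.assoc k A B A).symm.toLinearMap ∘ₗ
        TensorProduct.map (LinearMap.id : A →ₗ[k] A) φ ∘ₗ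
        (TensorProduct.assoc k A A B).toLinearMap)
      (LinearMap.id : B →ₗ[k] B) ∘ₗ
    (TensorProduct.assoc k (A ⊗[k] A) B B).symm.toLinearMap

lemma crossComul_eq_middleTensor_comp :
    crossComul φ = middleTensor φ ∘ₗ map (comul (R := k) (A := A)) (comul (R := k) (A := B)) :=
  rfl

omit [Coalgebra k A] in
lemma middleTensor_tmul (a₁ a₂ : A) (b₁ b₂ : B) :
    middleTensor φ ((a₁ ⊗ₜ[k] a₂) ⊗ₜ[k] (b₁ ⊗ₜ[k] b₂)) =
      TensorProduct.assoc k (A ⊗[k] B) A B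
        ((TensorProduct.assoc k A B A).symm (a₁ ⊗ₜ[k] φ (a₂ ⊗ₜ[k] b₁)) ⊗ₜ[k] b₂) :=
  rfl

lemma map_crossProj_assoc_tmul (a : A) (b : B) (t : B ⊗[k] A) :
    map crossProj crossProj (TensorProduct.assoc k (A ⊗[k] B) A B
        ((TensorProduct.assoc k A B A).symm (a ⊗ₜ[k] t) ⊗ₜ[k] b)) =
      counit (R := k) a • (TensorProduct.rid k B (map LinearMap.id counit t) ⊗ₜ[k] b) := by
  induction t using TensorProduct.induction_on with
  | zero => simp
  | tmul c d => simp [smul_tmul', smul_comm (counit (R := k) a)]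
  | add s t hs ht => simp only [tmul_add, map_add, add_tmul, hs, ht, smul_add]

lemma crossProj_rid_crossCounit_assoc_tmul (a : A) (b : B) (t : B ⊗[k] A) :
    crossProj (TensorProduct.rid k (A ⊗[k] B) (map LinearMap.id crossCounit
        (TensorProduct.assoc k (A ⊗[k] B) A B
          ((TensorProduct.assoc k A B A).symm (a ⊗ₜ[k] t) ⊗ₜ[k] b)))) =
      counit (R := k) a • counit (R := k) b •
        TensorProduct.rid k B (map LinearMap.id counit t) := by
  induction t using TensorProduct.induction_on with
  | zero => simp
  | tmul c d => simp [smul_smul, mul_comm]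
  | add s t hs ht => simp only [tmul_add, map_add, add_tmul, hs, ht, smul_add]

lemma crossProj_rid_crossCounit_comp_middleTensor :
    crossProj ∘ₗ (TensorProduct.rid k (A ⊗[k] B)).toLinearMap ∘ₗ
        map LinearMap.id (crossCounit (k := k) (A := A) (B := B)) ∘ₗ middleTensor φ =
      (TensorProduct.rid k B).toLinearMap ∘ₗ map LinearMap.id (counit (R := k)) ∘ₗ φ ∘ₗ
        map ((TensorProduct.lid k A).toLinearMap ∘ₗ rTensor A counit)
          ((TensorProduct.rid k B).toLinearMap ∘ₗ lTensor B counit) := by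
  ext a₁ a₂ b₁ b₂
  simp [middleTensor_tmul, crossProj_rid_crossCounit_assoc_tmul, ← smul_tmul',
    smul_comm (counit (R := k) b₂)]

lemma map_crossProj_comp_middleTensor (hφ : phiCondC φ) :
    map crossProj crossProj ∘ₗ middleTensor φ =
      (TensorProduct.lid k (B ⊗[k] B)).toLinearMap ∘ₗ
        rTensor (B ⊗[k] B) (counit (R := k) ∘ₗ (TensorProduct.lid k A).toLinearMap ∘ₗ
          rTensor A (counit (R := k))) := by
  ext a₁ a₂ b₁ b₂
  have h := congr($hφ (a₂ ⊗ₜ[k] b₁))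
  simp only [comp_apply, LinearEquiv.coe_coe, map_tmul, id_apply, lid_tmul] at h
  simp [middleTensor_tmul, map_crossProj_assoc_tmul, h, smul_tmul', mul_smul]

lemma map_crossProj_comp_crossComul (hφ : phiCondC φ) :
    map crossProj crossProj ∘ₗ crossComul φ = comul ∘ₗ crossProj := by
  ext a b
  have h := congr($(map_crossProj_comp_middleTensor φ hφ) (comul a ⊗ₜ[k] comul b))
  simp only [comp_apply, LinearEquiv.coe_coe, rTensor_tmul, rTensor_counit_comul, lid_tmul,
    one_smul] at h
  simp [crossComul_eq_middleTensor_comp, h]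

end CrossProduct

namespace IsCrossBialgebra

variable {ψ : B ⊗[k] A →ₗ[k] A ⊗[k] B} {φ : A ⊗[k] B →ₗ[k] B ⊗[k] A}

lemma psiCondC (H : IsCrossBialgebra ψ φ) : psiCondC ψ := fun b => by
  obtain ⟨-, -, hmul_one, -⟩ := H
  simpa [crossMul_tmul_tmul] using hmul_one ((1 : A) ⊗ₜ[k] b)

lemma psiCondD (H : IsCrossBialgebra ψ φ) : psiCondD ψ := fun a => by
  obtain ⟨-, hone_mul, -⟩ := H
  simpa [crossMul_tmul_tmul] using hone_mul (a ⊗ₜ[k] (1 : B))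

lemma counit_one (H : IsCrossBialgebra ψ φ) : counit (R := k) (1 : A) = 1 := by
  obtain ⟨-, -, -, -, -, -, -, hcounit_one, -⟩ := H
  simpa using hcounit_one

lemma counit_mul (H : IsCrossBialgebra ψ φ) (x y : A) :
    counit (R := k) (x * y) = counit (R := k) x * counit (R := k) y := by
  have hψ := H.psiCondD y
  obtain ⟨-, -, -, -, -, -, -, -, -, hcounit_mul⟩ := H
  simpa [crossMul_tmul_tmul, hψ] using
    congr($hcounit_mul ((x ⊗ₜ[k] (1 : B)) ⊗ₜ[k] (y ⊗ₜ[k] (1 : B))))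

lemma phiCondC (H : IsCrossBialgebra ψ φ) : phiCondC φ := by
  obtain ⟨-, -, -, -, -, hcounit_right, -⟩ := H
  refine TensorProduct.ext' fun a b => ?_
  have h := congr(crossProj ($hcounit_right (a ⊗ₜ[k] b)))
  have hmid := congr($(crossProj_rid_crossCounit_comp_middleTensor φ) (comul a ⊗ₜ[k] comul b))
  simp only [comp_apply, LinearEquiv.coe_coe, map_tmul, rTensor_counit_comul,
    lTensor_counit_comul, lid_tmul, rid_tmul, one_smul] at hmid
  simp only [crossComul_eq_middleTensor_comp, comp_apply, LinearEquiv.coe_coe, map_tmul,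
    id_apply, hmid] at h
  exact h

end IsCrossBialgebra

theorem leftConormal_projection_section (ψ : B ⊗[k] A →ₗ[k] A ⊗[k] B)
    (φ : A ⊗[k] B →ₗ[k] B ⊗[k] A) (H : IsCrossBialgebra ψ φ)
    (hconorm : ∀ (b : B) (a : A),
      (TensorProduct.lid k B)
        ((TensorProduct.map (Coalgebra.counit (R := k) (A := A))
          (LinearMap.id : B →ₗ[k] B)) (ψ (b ⊗ₜ[k] a))) =
        Coalgebra.counit (R := k) a • b) :
    (∀ x y : A ⊗[k] B,
      crossProj (k := k) (A := A) (B := B) (crossMul ψ (x ⊗ₜ[k] y)) =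
        crossProj (k := k) (A := A) (B := B) x * crossProj (k := k) (A := A) (B := B) y) ∧
    (crossProj (k := k) (A := A) (B := B) ((1 : A) ⊗ₜ[k] (1 : B)) = 1) ∧
    (∀ h : A ⊗[k] B,
      Coalgebra.comul (R := k) (crossProj (k := k) (A := A) (B := B) h) =
        TensorProduct.map (crossProj (k := k) (A := A) (B := B))
          (crossProj (k := k) (A := A) (B := B)) (crossComul φ h)) ∧
    (∀ h : A ⊗[k] B,
      Coalgebra.counit (R := k) (crossProj (k := k) (A := A) (B := B) h) =
        crossCounit (k := k) (A := A) (B := B) h) ∧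
    (∀ b b' : B,
      crossMul ψ (((1 : A) ⊗ₜ[k] b) ⊗ₜ[k] ((1 : A) ⊗ₜ[k] b')) =
        (1 : A) ⊗ₜ[k] (b * b')) ∧
    (∀ b : B, crossProj (k := k) (A := A) (B := B) ((1 : A) ⊗ₜ[k] b) = b) := by
  refine ⟨fun x y => congr($(crossProj_comp_crossMul ψ H.counit_mul hconorm) (x ⊗ₜ[k] y)),
    by simp [H.counit_one],
    fun h => congr($(map_crossProj_comp_crossComul φ H.phiCondC) h).symm,
    fun h => congr($(counit_comp_crossProj) h),
    crossMul_one_tmul_one_tmul ψ H.psiCondC,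
    fun b => by simp [H.counit_one]⟩
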